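/- arXiv:1711.00731 — 5 statements merged into one kernel-verified Lean document; each statement's English description precedes it below -/
import Mathlib

section
/- Let ω ⊂ ℝ² be a bounded domain and let θ : closure(ω) → ℝ³ be an injective mapping of class C² such that the two vectors a_α(y) := ∂_α θ(y), α = 1,2, are linearly independent at all points y of the closure of ω. Then there exists ε₀ > 0 such that for every ε₁ with 0 < ε₁ ≤ ε₀, the mapping Θ : closure(ω) × [−ε₁, ε₁] → ℝ³ defined by Θ(y, x₃) := θ(y) + x₃ a₃(y) is a C¹-diffeomorphism from closure(ω) × [−ε₁, ε₁] onto its image Θ(closure(ω) × [−ε₁, ε₁]), and det(g₁, g₂, g₃) > 0 at every point of closure(ω) × [−ε₁, ε₁], where g_i := ∂_i Θ. -/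
/-!
At a point `(y, 0)` the columns of the Jacobian matrix of `Θ` are `a₁, a₂, a₃`, so its determinant
is `|a₁ × a₂| > 0`; by continuity it stays positive on a neighbourhood of `closure ω × {0}`, where
the inverse function theorem provides local `C¹` left inverses. As `Θ(·, 0) = θ` is injective on
the compact set `closure ω`, local injectivity upgrades to injectivity on a neighbourhood of
`closure ω × {0}`, and by the tube lemma such a neighbourhood contains `closure ω × [-ε, ε]`. On
this compact set the global inverse agrees near every image point with a local `C¹` inverse.
-/

open Set Function Filter Topology Matrix

section LocalInverse

variable {𝕂 : Type*} [RCLike 𝕂] {E F : Type*} [NormedAddCommGroup E] [NormedSpace 𝕂 E]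
  [NormedAddCommGroup F] [NormedSpace 𝕂 F] {n : WithTop ℕ∞} {f : E → F}

def HasContDiffLocalLeftInverseAt (𝕂 : Type*) [RCLike 𝕂] {E F : Type*}
    [NormedAddCommGroup E] [NormedSpace 𝕂 E] [NormedAddCommGroup F] [NormedSpace 𝕂 F]
    (n : WithTop ℕ∞) (f : E → F) (p : E) : Prop :=
  ∃ g : F → E, ContDiffAt 𝕂 n g (f p) ∧ ∀ᶠ x in 𝓝 p, g (f x) = x

theorem ContDiffAt.hasContDiffLocalLeftInverseAt [CompleteSpace E] {f' : E ≃L[𝕂] F} {p : E}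
    (hf : ContDiffAt 𝕂 n f p) (hf' : HasFDerivAt f (f' : E →L[𝕂] F) p) (hn : n ≠ 0) :
    HasContDiffLocalLeftInverseAt 𝕂 n f p :=
  ⟨hf.localInverse hf' hn, hf.to_localInverse hf' hn,
    (hf.hasStrictFDerivAt' hf' hn).eventually_left_inverse⟩

theorem HasContDiffLocalLeftInverseAt.exists_mem_nhds_injOn {p : E}
    (hf : HasContDiffLocalLeftInverseAt 𝕂 n f p) : ∃ u ∈ 𝓝 p, InjOn f u :=
  let ⟨_, _, hg⟩ := hf
  ⟨_, hg, LeftInvOn.injOn fun _ hx => hx⟩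

theorem IsCompact.contDiffOn_invFunOn_image {S : Set E} (hS : IsCompact S)
    (hfS : ContinuousOn f S) (hinj : InjOn f S)
    (hloc : ∀ p ∈ S, HasContDiffLocalLeftInverseAt 𝕂 n f p) :
    ContDiffOn 𝕂 n (invFunOn f S) (f '' S) := by
  rintro _ ⟨p, hpS, rfl⟩
  obtain ⟨g, hg, hgf⟩ := hloc p hpS
  obtain ⟨O, hgO, hOo, hpO⟩ := mem_nhds_iff.mp hgf
  -- `f '' (S \ O)` is compact, hence closed, and misses `f p` by injectivity.
  have hfar : (f '' (S \ O))ᶜ ∈ 𝓝 (f p) := by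
    refine ((hS.diff hOo).image_of_continuousOn (hfS.mono sdiff_subset)).isClosed.isOpen_compl
      |>.mem_nhds ?_
    rintro ⟨r, hr, hrp⟩
    exact hr.2 (hinj hr.1 hpS hrp ▸ hpO)
  have hev : invFunOn f S =ᶠ[𝓝[f '' S] f p] g := by
    filter_upwards [self_mem_nhdsWithin, nhdsWithin_le_nhds hfar]
    rintro _ ⟨r, hrS, rfl⟩ hr
    have hrO : r ∈ O := by_contra fun hrO => hr ⟨r, ⟨hrS, hrO⟩, rfl⟩
    rw [hinj.leftInvOn_invFunOn hrS, hgO hrO]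
  exact hg.contDiffWithinAt.congr_of_eventuallyEq hev
    (by rw [hinj.leftInvOn_invFunOn hpS, hgO hpO])

end LocalInverse

theorem IsCompact.exists_prod_Icc_subset {X : Type*} [TopologicalSpace X] {K : Set X}
    (hK : IsCompact K) {t : Set (X × ℝ)} (ht : t ∈ 𝓝ˢ (K ×ˢ {0})) :
    ∃ ε > 0, K ×ˢ Icc (-ε) ε ⊆ t := by
  rw [hK.nhdsSet_prod_eq isCompact_singleton, nhdsSet_singleton] at ht
  obtain ⟨u, hu, v, hv, huv⟩ := mem_prod_iff.mp ht
  obtain ⟨ε, hε, hεv⟩ := Metric.nhds_basis_closedBall.mem_iff.mp hv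
  refine ⟨ε, hε, (prod_mono (subset_of_mem_nhdsSet hu) ?_).trans huv⟩
  simpa [Real.closedBall_eq_Icc] using hεv

section LinearAlgebra

variable {E F ι : Type*} [NormedAddCommGroup E] [NormedSpace ℝ E] [FiniteDimensional ℝ E]
  [NormedAddCommGroup F] [NormedSpace ℝ F] [Fintype ι] [DecidableEq ι]
  (b : Module.Basis ι ℝ E) (b' : Module.Basis ι ℝ F)

theorem ContinuousLinearMap.exists_equiv_of_det_toMatrix_ne_zero {L : E →L[ℝ] F}
    (hL : (LinearMap.toMatrix b b' L).det ≠ 0) : ∃ e : E ≃L[ℝ] F, (e : E →L[ℝ] F) = L :=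
  ⟨(LinearEquiv.ofIsUnitDet (isUnit_iff_ne_zero.mpr hL)).toContinuousLinearEquiv, rfl⟩

theorem continuous_det_toMatrix [FiniteDimensional ℝ F] :
    Continuous fun L : E →L[ℝ] F => (LinearMap.toMatrix b b' L).det :=
  ((LinearMap.toMatrix b b').toLinearMap ∘ₗ ContinuousLinearMap.coeLM ℝ)
    |>.continuous_of_finiteDimensional.matrix_det

end LinearAlgebra

theorem sum_sq_pos_of_ne_zero {ι : Type*} [Fintype ι] {u : ι → ℝ} (hu : u ≠ 0) :
    0 < ∑ i, u i ^ 2 := by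
  obtain ⟨i, hi⟩ := Function.ne_iff.mp hu
  exact Finset.sum_pos' (fun j _ => sq_nonneg _) ⟨i, Finset.mem_univ i, pow_two_pos_of_ne_zero hi⟩

theorem det_cross_unitNormal_pos {u v : Fin 3 → ℝ} (huv : u ⨯₃ v ≠ 0) :
    0 < det ![u, v, (√(∑ i, (u ⨯₃ v) i ^ 2))⁻¹ • u ⨯₃ v] := by
  set w := u ⨯₃ v
  have hw : 0 < ∑ i, w i ^ 2 := sum_sq_pos_of_ne_zero huv
  have hr : 0 < √(∑ i, w i ^ 2) := Real.sqrt_pos.mpr hw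
  have hdot : w ⬝ᵥ w = (√(∑ i, w i ^ 2)) ^ 2 := by
    rw [Real.sq_sqrt hw.le, dotProduct]
    simp only [sq]
  rw [← triple_product_eq_det, triple_product_permutation, triple_product_permutation,
    smul_dotProduct, hdot, smul_eq_mul, sq, inv_mul_cancel_left₀ hr.ne']
  exact hr

theorem ContDiffOn.cross {E : Type*} [NormedAddCommGroup E] [NormedSpace ℝ E] {n : WithTop ℕ∞}
    {s : Set E} {u v : E → Fin 3 → ℝ} (hu : ContDiffOn ℝ n u s) (hv : ContDiffOn ℝ n v s) :
    ContDiffOn ℝ n (fun x => u x ⨯₃ v x) s := by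
  have hu' := contDiffOn_pi.mp hu
  have hv' := contDiffOn_pi.mp hv
  refine contDiffOn_pi.mpr fun i => ?_
  fin_cases i <;> simp only [cross_apply] <;>
    exact ((hu' _).mul (hv' _)).sub ((hu' _).mul (hv' _))

theorem ContDiffOn.inv_sqrt_sum_sq_smul {E ι : Type*} [NormedAddCommGroup E] [NormedSpace ℝ E]
    [Fintype ι] {n : WithTop ℕ∞} {s : Set E} {u : E → ι → ℝ} (hu : ContDiffOn ℝ n u s)
    (hu0 : ∀ x ∈ s, u x ≠ 0) :
    ContDiffOn ℝ n (fun x => (√(∑ i, u x i ^ 2))⁻¹ • u x) s := by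
  have hpos : ∀ x ∈ s, 0 < ∑ i, u x i ^ 2 := fun x hx => sum_sq_pos_of_ne_zero (hu0 x hx)
  have hsum : ContDiffOn ℝ n (fun x => ∑ i, u x i ^ 2) s :=
    ContDiffOn.sum fun i _ => (contDiffOn_pi.mp hu i).pow 2
  exact ((hsum.sqrt fun x hx => (hpos x hx).ne').inv
    fun x hx => (Real.sqrt_pos.mpr (hpos x hx)).ne').smul hu

theorem fderiv_add_smul_apply_zero {E F : Type*} [NormedAddCommGroup E] [NormedSpace ℝ E]
    [NormedAddCommGroup F] [NormedSpace ℝ F] {θ ν : E → F} {y : E}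
    (hθ : DifferentiableAt ℝ θ y) (hν : DifferentiableAt ℝ ν y) (v : E) (s : ℝ) :
    fderiv ℝ (fun p : E × ℝ => θ p.1 + p.2 • ν p.1) (y, 0) (v, s) =
      fderiv ℝ θ y v + s • ν y := by
  have hfst : HasFDerivAt (Prod.fst : E × ℝ → E) (ContinuousLinearMap.fst ℝ E ℝ) (y, 0) :=
    hasFDerivAt_fst
  have h : HasFDerivAt (fun p : E × ℝ => θ p.1 + p.2 • ν p.1) _ (y, 0) :=
    (hθ.hasFDerivAt.comp (y, 0) hfst).add
      (hasFDerivAt_snd.smul (hν.hasFDerivAt.comp (y, 0) hfst))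
  rw [h.fderiv]
  simp

section NormalCoordinates

variable {U : Set (Fin 2 → ℝ)} {θ : (Fin 2 → ℝ) → Fin 3 → ℝ}

noncomputable def tangentCross (θ : (Fin 2 → ℝ) → Fin 3 → ℝ) (y : Fin 2 → ℝ) :
    Fin 3 → ℝ :=
  fderiv ℝ θ y (Pi.single 0 1) ⨯₃ fderiv ℝ θ y (Pi.single 1 1)

noncomputable def unitNormal (θ : (Fin 2 → ℝ) → Fin 3 → ℝ) (y : Fin 2 → ℝ) :
    Fin 3 → ℝ :=
  (√(∑ i, tangentCross θ y i ^ 2))⁻¹ • tangentCross θ y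

noncomputable def normalCoords (θ : (Fin 2 → ℝ) → Fin 3 → ℝ) (p : (Fin 2 → ℝ) × ℝ) :
    Fin 3 → ℝ :=
  θ p.1 + p.2 • unitNormal θ p.1

noncomputable def prodBasis : Module.Basis (Fin 3) ℝ ((Fin 2 → ℝ) × ℝ) :=
  ((Pi.basisFun ℝ (Fin 2)).prod (Module.Basis.singleton (Fin 1) ℝ)).reindex finSumFinEquiv

theorem prodBasis_zero : prodBasis 0 = (Pi.single 0 1, 0) := by
  have : (finSumFinEquiv (m := 2) (n := 1)).symm 0 = Sum.inl 0 := by decide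
  simp [prodBasis, this]

theorem prodBasis_one : prodBasis 1 = (Pi.single 1 1, 0) := by
  have : (finSumFinEquiv (m := 2) (n := 1)).symm 1 = Sum.inl 1 := by decide
  simp [prodBasis, this]

theorem prodBasis_two : prodBasis 2 = (0, 1) := by
  have : (finSumFinEquiv (m := 2) (n := 1)).symm 2 = Sum.inr 0 := by decide
  simp [prodBasis, this]

noncomputable def jacobianDet (θ : (Fin 2 → ℝ) → Fin 3 → ℝ) (p : (Fin 2 → ℝ) × ℝ) :
    ℝ :=
  (LinearMap.toMatrix prodBasis (Pi.basisFun ℝ (Fin 3)) (fderiv ℝ (normalCoords θ) p)).det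

def posJacobianSet (θ : (Fin 2 → ℝ) → Fin 3 → ℝ) (U : Set (Fin 2 → ℝ)) :
    Set ((Fin 2 → ℝ) × ℝ) :=
  {p | p.1 ∈ U ∧ tangentCross θ p.1 ≠ 0 ∧ 0 < jacobianDet θ p}

theorem injOn_normalCoords_prod_zero {K : Set (Fin 2 → ℝ)} (h : InjOn θ K) :
    InjOn (normalCoords θ) (K ×ˢ {0}) := by
  rintro ⟨y, _⟩ ⟨hy, rfl⟩ ⟨z, _⟩ ⟨hz, rfl⟩ hyz
  simp only [normalCoords, zero_smul, add_zero] at hyz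
  rw [h (x₁ := y) hy hz hyz]

theorem posJacobianSet_subset :
    posJacobianSet θ U ⊆ {y ∈ U | tangentCross θ y ≠ 0} ×ˢ univ :=
  fun _ hp => ⟨⟨hp.1, hp.2.1⟩, trivial⟩

variable (hU : IsOpen U) (hθ : ContDiffOn ℝ 2 θ U)
include hU hθ

theorem contDiffOn_tangentCross : ContDiffOn ℝ 1 (tangentCross θ) U := by
  have hDθ : ContDiffOn ℝ 1 (fderiv ℝ θ) U := hθ.fderiv_of_isOpen hU (by norm_num)
  exact (hDθ.clm_apply contDiffOn_const).cross (hDθ.clm_apply contDiffOn_const)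

theorem isOpen_tangentCross_ne_zero : IsOpen {y ∈ U | tangentCross θ y ≠ 0} :=
  (contDiffOn_tangentCross hU hθ).continuousOn.isOpen_inter_preimage hU (isOpen_ne (x := 0))

theorem contDiffOn_unitNormal :
    ContDiffOn ℝ 1 (unitNormal θ) {y ∈ U | tangentCross θ y ≠ 0} :=
  ((contDiffOn_tangentCross hU hθ).mono (sep_subset _ _)).inv_sqrt_sum_sq_smul fun _ hy => hy.2

theorem contDiffOn_normalCoords :
    ContDiffOn ℝ 1 (normalCoords θ) ({y ∈ U | tangentCross θ y ≠ 0} ×ˢ univ) :=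
  ((hθ.of_le one_le_two).mono (sep_subset _ _)).comp contDiffOn_fst (fun _ hp => hp.1)
    |>.add (contDiffOn_snd.smul ((contDiffOn_unitNormal hU hθ).comp contDiffOn_fst
      fun _ hp => hp.1))

theorem isOpen_posJacobianSet : IsOpen (posJacobianSet θ U) := by
  have hV := (isOpen_tangentCross_ne_zero hU hθ).prod (isOpen_univ (X := ℝ))
  have hdet : ContinuousOn (jacobianDet θ) ({y ∈ U | tangentCross θ y ≠ 0} ×ˢ univ) :=
    (continuous_det_toMatrix prodBasis (Pi.basisFun ℝ (Fin 3))).comp_continuousOn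
      ((contDiffOn_normalCoords hU hθ).continuousOn_fderiv_of_isOpen hV le_rfl)
  convert hdet.isOpen_inter_preimage hV (isOpen_Ioi (a := 0)) using 1
  ext p
  simp [posJacobianSet, and_assoc]

theorem jacobianDet_zero_pos {y : Fin 2 → ℝ} (hy : y ∈ U) (hy₀ : tangentCross θ y ≠ 0) :
    0 < jacobianDet θ (y, 0) := by
  have hθy : DifferentiableAt ℝ θ y :=
    (hθ.contDiffAt (hU.mem_nhds hy)).differentiableAt two_ne_zero
  have hνy : DifferentiableAt ℝ (unitNormal θ) y :=
    ((contDiffOn_unitNormal hU hθ).contDiffAt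
      ((isOpen_tangentCross_ne_zero hU hθ).mem_nhds ⟨hy, hy₀⟩)).differentiableAt one_ne_zero
  have hcol : ∀ v s, fderiv ℝ (normalCoords θ) (y, 0) (v, s) =
      fderiv ℝ θ y v + s • unitNormal θ y :=
    fderiv_add_smul_apply_zero hθy hνy
  have hmat :
      LinearMap.toMatrix prodBasis (Pi.basisFun ℝ (Fin 3)) (fderiv ℝ (normalCoords θ) (y, 0)) =
        (of ![fderiv ℝ θ y (Pi.single 0 1), fderiv ℝ θ y (Pi.single 1 1), unitNormal θ y])ᵀ := by
    ext i j
    fin_cases j <;>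
      simp [LinearMap.toMatrix_apply, hcol, prodBasis_zero, prodBasis_one, prodBasis_two]
  rw [jacobianDet, hmat, det_transpose]
  exact det_cross_unitNormal_pos hy₀

theorem hasContDiffLocalLeftInverseAt_normalCoords {p : (Fin 2 → ℝ) × ℝ}
    (hp : p ∈ posJacobianSet θ U) : HasContDiffLocalLeftInverseAt ℝ 1 (normalCoords θ) p := by
  have hV := (isOpen_tangentCross_ne_zero hU hθ).prod (isOpen_univ (X := ℝ))
  have hf : ContDiffAt ℝ 1 (normalCoords θ) p :=
    (contDiffOn_normalCoords hU hθ).contDiffAt (hV.mem_nhds (posJacobianSet_subset hp))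
  obtain ⟨e, he⟩ := ContinuousLinearMap.exists_equiv_of_det_toMatrix_ne_zero prodBasis
    (Pi.basisFun ℝ (Fin 3)) hp.2.2.ne'
  exact hf.hasContDiffLocalLeftInverseAt (he ▸ (hf.differentiableAt one_ne_zero).hasFDerivAt)
    one_ne_zero

end NormalCoordinates

theorem stmt0_general (ω : Set (Fin 2 → ℝ)) (hωb : Bornology.IsBounded ω)
    (U : Set (Fin 2 → ℝ)) (hUo : IsOpen U) (hωU : closure ω ⊆ U)
    (θ : (Fin 2 → ℝ) → Fin 3 → ℝ) (hθ : ContDiffOn ℝ 2 θ U) (hθinj : InjOn θ (closure ω))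
    (a : Fin 2 → (Fin 2 → ℝ) → Fin 3 → ℝ)
    (ha : ∀ α y, a α y = fderiv ℝ θ y (Pi.single α 1))
    (hind : ∀ y ∈ closure ω, LinearIndependent ℝ ![a 0 y, a 1 y])
    (c : (Fin 2 → ℝ) → Fin 3 → ℝ)
    (hc : ∀ y, c y = ![a 0 y 1 * a 1 y 2 - a 0 y 2 * a 1 y 1,
                       a 0 y 2 * a 1 y 0 - a 0 y 0 * a 1 y 2,
                       a 0 y 0 * a 1 y 1 - a 0 y 1 * a 1 y 0])
    (a3 : (Fin 2 → ℝ) → Fin 3 → ℝ)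
    (ha3 : ∀ y, a3 y = (Real.sqrt (∑ i, c y i ^ 2))⁻¹ • c y)
    (Θ : (Fin 2 → ℝ) × ℝ → Fin 3 → ℝ)
    (hΘ : ∀ p, Θ p = θ p.1 + p.2 • a3 p.1)
    (gvec : Fin 3 → ((Fin 2 → ℝ) × ℝ) → Fin 3 → ℝ)
    (hgvec0 : ∀ p, gvec 0 p = fderiv ℝ Θ p (Pi.single 0 1, 0))
    (hgvec1 : ∀ p, gvec 1 p = fderiv ℝ Θ p (Pi.single 1 1, 0))
    (hgvec2 : ∀ p, gvec 2 p = fderiv ℝ Θ p (0, 1)) :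
    ∃ ε₀ > (0 : ℝ), ∀ ε₁ : ℝ, 0 < ε₁ → ε₁ ≤ ε₀ →
      InjOn Θ (closure ω ×ˢ Icc (-ε₁) ε₁) ∧
      ContDiffOn ℝ 1 Θ (closure ω ×ˢ Icc (-ε₁) ε₁) ∧
      (∃ Ψ : (Fin 3 → ℝ) → (Fin 2 → ℝ) × ℝ,
        ContDiffOn ℝ 1 Ψ (Θ '' (closure ω ×ˢ Icc (-ε₁) ε₁)) ∧
        ∀ p ∈ closure ω ×ˢ Icc (-ε₁) ε₁, Ψ (Θ p) = p) ∧
      ∀ p ∈ closure ω ×ˢ Icc (-ε₁) ε₁,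
        0 < (Matrix.of fun i j => gvec j p i : Matrix (Fin 3) (Fin 3) ℝ).det := by
  obtain rfl : a = fun α y => fderiv ℝ θ y (Pi.single α 1) := funext₂ ha
  obtain rfl : c = tangentCross θ := funext fun y => (hc y).trans (cross_apply _ _).symm
  obtain rfl : a3 = unitNormal θ := funext ha3
  obtain rfl : Θ = normalCoords θ := funext hΘ
  have hdet (p) : (Matrix.of fun i j => gvec j p i).det = jacobianDet θ p := by
    congr 1
    ext i j
    fin_cases j <;>
      simp [LinearMap.toMatrix_apply, hgvec0, hgvec1, hgvec2, prodBasis_zero, prodBasis_one,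
        prodBasis_two]
  have hK : IsCompact (closure ω) := hωb.isCompact_closure
  have hW := isOpen_posJacobianSet hUo hθ
  have hKW : closure ω ×ˢ {0} ⊆ posJacobianSet θ U := by
    rintro ⟨y, _⟩ ⟨hy, rfl⟩
    have hy₀ := crossProduct_ne_zero_iff_linearIndependent.mpr (hind y hy)
    exact ⟨hωU hy, hy₀, jacobianDet_zero_pos hUo hθ (hωU hy) hy₀⟩
  have hC := (contDiffOn_normalCoords hUo hθ).mono posJacobianSet_subset
  have hloc : ∀ p ∈ posJacobianSet θ U, HasContDiffLocalLeftInverseAt ℝ 1 (normalCoords θ) p :=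
    fun _ => hasContDiffLocalLeftInverseAt_normalCoords hUo hθ
  obtain ⟨t, ht, hinj⟩ := (injOn_normalCoords_prod_zero hθinj).exists_mem_nhdsSet
    (hK.prod isCompact_singleton)
    (fun p hp => hC.continuousOn.continuousAt (hW.mem_nhds (hKW hp)))
    (fun p hp => (hloc p (hKW hp)).exists_mem_nhds_injOn)
  obtain ⟨ε, hε, hεt⟩ := hK.exists_prod_Icc_subset (inter_mem ht (hW.mem_nhdsSet.mpr hKW))
  refine ⟨ε, hε, fun ε₁ _ hε₁ => ?_⟩
  have hS : closure ω ×ˢ Icc (-ε₁) ε₁ ⊆ t ∩ posJacobianSet θ U :=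
    (prod_mono_right (Icc_subset_Icc (neg_le_neg hε₁) hε₁)).trans hεt
  have hinjS := hinj.mono (hS.trans inter_subset_left)
  have hCS := hC.mono (hS.trans inter_subset_right)
  refine ⟨hinjS, hCS, ⟨invFunOn _ _, ?_, fun p hp => hinjS.leftInvOn_invFunOn hp⟩,
    fun p hp => hdet p ▸ (hS hp).2.2.2⟩
  exact (hK.prod isCompact_Icc).contDiffOn_invFunOn_image hCS.continuousOn hinjS
    fun p hp => hloc p (hS hp).2

/-- If `θ` is an injective `C²` immersion of the closure of a bounded domain `ω ⊂ ℝ²`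
into `ℝ³`, then for all small enough `ε₁ > 0` the map `Θ(y,x₃) = θ(y) + x₃ a₃(y)` is a
`C¹`-diffeomorphism of `closure ω × [−ε₁, ε₁]` onto its image, with
`det(∂₁Θ, ∂₂Θ, ∂₃Θ) > 0` everywhere on that set. -/
theorem stmt0 (ω : Set (Fin 2 → ℝ)) (hωo : IsOpen ω) (hωb : Bornology.IsBounded ω)
    (hωc : IsConnected ω)
    (U : Set (Fin 2 → ℝ)) (hUo : IsOpen U) (hωU : closure ω ⊆ U)
    (θ : (Fin 2 → ℝ) → Fin 3 → ℝ) (hθ : ContDiffOn ℝ 2 θ U) (hθinj : InjOn θ (closure ω))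
    (a : Fin 2 → (Fin 2 → ℝ) → Fin 3 → ℝ)
    (ha : ∀ α y, a α y = fderiv ℝ θ y (Pi.single α 1))
    (hind : ∀ y ∈ closure ω, LinearIndependent ℝ ![a 0 y, a 1 y])
    (c : (Fin 2 → ℝ) → Fin 3 → ℝ)
    (hc : ∀ y, c y = ![a 0 y 1 * a 1 y 2 - a 0 y 2 * a 1 y 1,
                       a 0 y 2 * a 1 y 0 - a 0 y 0 * a 1 y 2,
                       a 0 y 0 * a 1 y 1 - a 0 y 1 * a 1 y 0])
    (a3 : (Fin 2 → ℝ) → Fin 3 → ℝ)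
    (ha3 : ∀ y, a3 y = (Real.sqrt (∑ i, c y i ^ 2))⁻¹ • c y)
    (Θ : (Fin 2 → ℝ) × ℝ → Fin 3 → ℝ)
    (hΘ : ∀ p, Θ p = θ p.1 + p.2 • a3 p.1)
    (gvec : Fin 3 → ((Fin 2 → ℝ) × ℝ) → Fin 3 → ℝ)
    (hgvec0 : ∀ p, gvec 0 p = fderiv ℝ Θ p (Pi.single 0 1, 0))
    (hgvec1 : ∀ p, gvec 1 p = fderiv ℝ Θ p (Pi.single 1 1, 0))
    (hgvec2 : ∀ p, gvec 2 p = fderiv ℝ Θ p (0, 1)) :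
    ∃ ε₀ > (0 : ℝ), ∀ ε₁ : ℝ, 0 < ε₁ → ε₁ ≤ ε₀ →
      InjOn Θ (closure ω ×ˢ Icc (-ε₁) ε₁) ∧
      ContDiffOn ℝ 1 Θ (closure ω ×ˢ Icc (-ε₁) ε₁) ∧
      (∃ Ψ : (Fin 3 → ℝ) → (Fin 2 → ℝ) × ℝ,
        ContDiffOn ℝ 1 Ψ (Θ '' (closure ω ×ˢ Icc (-ε₁) ε₁)) ∧
        ∀ p ∈ closure ω ×ˢ Icc (-ε₁) ε₁, Ψ (Θ p) = p) ∧
      ∀ p ∈ closure ω ×ˢ Icc (-ε₁) ε₁,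
        0 < (Matrix.of fun i j => gvec j p i : Matrix (Fin 3) (Fin 3) ℝ).det :=
  stmt0_general ω hωb U hUo hωU θ hθ hθinj a ha hind c hc a3 ha3 Θ hΘ gvec hgvec0 hgvec1 hgvec2
end

section
/- Let (a^{αβ}) be a symmetric positive definite 2×2 real matrix, λ ≥ 0, μ > 0. Define the 3×3 symmetric matrix (g^{ij}) by g^{αβ} := a^{αβ} for α,β ∈ {1,2}, g^{α3} = g^{3α} := 0, g^{33} := 1, and set A^{ijkl} := λ g^{ij} g^{kl} + μ (g^{ik} g^{jl} + g^{il} g^{jk}) for i,j,k,l ∈ {1,2,3}. Then there exists a constant C_e > 0 such that for every symmetric 3×3 real matrix t = (t_{ij}): Σ_{i,j=1}^{3} |t_{ij}|² ≤ C_e · Σ_{i,j,k,l=1}^{3} A^{ijkl} t_{kl} t_{ij}. Moreover A^{αβστ} = λ a^{αβ} a^{στ} + μ (a^{ασ} a^{βτ} + a^{ατ} a^{βσ}), A^{αβ33} = λ a^{αβ}, A^{α3σ3} = μ a^{ασ}, A^{3333} = λ + 2μ, and A^{αβσ3} = A^{α333} = 0 for all Greek indices in {1,2}. -/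
/-!
Writing `A^{ijkl} t_{kl} t_{ij} = λ (g : t)² + 2μ (g t g) : t`, coercivity reduces to that of the
second term. Since `g` is positive definite (its upper block is `a` and it has `1` in the corner),
`g = Bᵀ B` with `B` invertible, and `(g t g) : t = ‖B t Bᵀ‖²` in the Frobenius norm; then
`t = B⁻¹ (B t Bᵀ) B⁻ᵀ` and submultiplicativity of the Frobenius norm give
`‖t‖² ≤ ‖B⁻¹‖⁴ ‖B t Bᵀ‖²`.
-/

open Matrix

theorem Matrix.PosDef.of_castSucc {m : ℕ} {a : Matrix (Fin m) (Fin m) ℝ} (ha : a.PosDef)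
    {g : Matrix (Fin (m + 1)) (Fin (m + 1)) ℝ}
    (hg : ∀ α β : Fin m, g α.castSucc β.castSucc = a α β)
    (hg_last : ∀ α : Fin m, g α.castSucc (Fin.last m) = 0 ∧ g (Fin.last m) α.castSucc = 0)
    (hlast : 0 < g (Fin.last m) (Fin.last m)) : g.PosDef := by
  have hsymm : g.IsSymm := by
    refine IsSymm.ext fun i j => ?_
    induction i using Fin.lastCases <;> induction j using Fin.lastCases <;>
      simp only [hg, hg_last, (isHermitian_iff_isSymm.mp ha.isHermitian).apply]
  have hquad (x : Fin (m + 1) → ℝ) : x ⬝ᵥ (g *ᵥ x)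
      = Fin.init x ⬝ᵥ (a *ᵥ Fin.init x) + g (Fin.last m) (Fin.last m) * x (Fin.last m) ^ 2 := by
    simp only [dotProduct, mulVec, Fin.sum_univ_castSucc, hg, hg_last, Fin.init, zero_mul,
      Finset.sum_const_zero, add_zero]
    ring
  refine posDef_iff_dotProduct_mulVec.mpr ⟨isHermitian_iff_isSymm.mpr hsymm, fun x hx => ?_⟩
  rw [star_trivial, hquad]
  by_cases hinit : Fin.init x = 0
  · have hx_last : x (Fin.last m) ≠ 0 := fun h => hx (by
      ext i
      induction i using Fin.lastCases
      · exact h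
      · exact congrFun hinit _)
    rw [hinit, mulVec_zero, dotProduct_zero, zero_add]
    positivity
  · have := ha.dotProduct_mulVec_pos hinit
    rw [star_trivial] at this
    positivity

section QuadraticForm

variable {n : Type*} [Fintype n]

theorem Matrix.PosDef.exists_eq_transpose_mul_self [DecidableEq n] {g : Matrix n n ℝ}
    (hg : g.PosDef) : ∃ B : Matrix n n ℝ, IsUnit B ∧ g = Bᵀ * B := by
  open scoped MatrixOrder Matrix.Norms.L2Operator in
  obtain ⟨B, hB, rfl⟩ :=
    CStarAlgebra.isStrictlyPositive_iff_eq_star_mul_self.mp hg.isStrictlyPositive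
  exact ⟨B, hB, by rw [star_eq_conjTranspose, conjTranspose_eq_transpose_of_trivial]⟩

theorem sum_transpose_mul_self_mul_mul_eq_sum_sq (B t : Matrix n n ℝ) :
    ∑ i, ∑ j, (Bᵀ * B * t * (Bᵀ * B)) i j * t i j = ∑ i, ∑ j, (B * t * Bᵀ) i j ^ 2 := by
  have hsum (X Y : Matrix n n ℝ) : ∑ i, ∑ j, X i j * Y i j = trace (X * Yᵀ) :=
    sum_hadamard_eq X Y
  simp only [sq, hsum, transpose_mul, transpose_transpose, Matrix.mul_assoc]
  rw [← trace_mul_comm]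
  simp only [Matrix.mul_assoc]

section Frobenius

attribute [local instance] Matrix.frobeniusNormedAddCommGroup

theorem Matrix.frobenius_norm_sq {m : Type*} [Fintype m] (M : Matrix m n ℝ) : ‖M‖ ^ 2 = ∑ i, ∑ j, M i j ^ 2 := by
  rw [frobenius_norm_def, ← Real.sqrt_eq_rpow, Real.sq_sqrt (by positivity)]
  simp

theorem Matrix.PosDef.exists_sum_sq_le [DecidableEq n] {g : Matrix n n ℝ} (hg : g.PosDef) :
    ∃ c > 0, ∀ t : Matrix n n ℝ,
      ∑ i, ∑ j, t i j ^ 2 ≤ c * ∑ i, ∑ j, (g * t * g) i j * t i j := by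
  obtain ⟨B, hB, rfl⟩ := hg.exists_eq_transpose_mul_self
  have hBdet : IsUnit B.det := (isUnit_iff_isUnit_det B).mp hB
  refine ⟨‖B⁻¹‖ ^ 4 + 1, by positivity, fun t => ?_⟩
  have ht : t = B⁻¹ * (B * t * Bᵀ) * (B⁻¹)ᵀ := by
    rw [transpose_nonsing_inv, Matrix.mul_assoc, Matrix.mul_assoc,
      mul_nonsing_inv _ (by rwa [det_transpose]), mul_one, ← Matrix.mul_assoc,
      nonsing_inv_mul _ hBdet, one_mul]
  have hnorm : ‖t‖ ≤ ‖B⁻¹‖ ^ 2 * ‖B * t * Bᵀ‖ :=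
    calc ‖t‖ = ‖B⁻¹ * (B * t * Bᵀ) * (B⁻¹)ᵀ‖ := congrArg _ ht
      _ ≤ ‖B⁻¹‖ * ‖B * t * Bᵀ‖ * ‖(B⁻¹)ᵀ‖ :=
        (frobenius_norm_mul _ _).trans (by gcongr; exact frobenius_norm_mul _ _)
      _ = ‖B⁻¹‖ ^ 2 * ‖B * t * Bᵀ‖ := by rw [frobenius_norm_transpose]; ring
  rw [sum_transpose_mul_self_mul_mul_eq_sum_sq, ← Matrix.frobenius_norm_sq, ← Matrix.frobenius_norm_sq]
  calc ‖t‖ ^ 2 ≤ (‖B⁻¹‖ ^ 2 * ‖B * t * Bᵀ‖) ^ 2 := by gcongr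
    _ ≤ (‖B⁻¹‖ ^ 4 + 1) * ‖B * t * Bᵀ‖ ^ 2 := by nlinarith [sq_nonneg ‖B * t * Bᵀ‖]

end Frobenius

theorem sum_mul_mul_mul_mul_eq_sum_mul_mul (g t : Matrix n n ℝ) (hg : g.IsSymm) :
    ∑ i, ∑ j, ∑ k, ∑ l, g i k * g j l * t k l * t i j = ∑ i, ∑ j, (g * t * g) i j * t i j := by
  simp only [mul_apply, Finset.sum_mul]
  refine Finset.sum_congr rfl fun i _ => Finset.sum_congr rfl fun j _ => ?_
  rw [Finset.sum_comm]
  refine Finset.sum_congr rfl fun l _ => Finset.sum_congr rfl fun k _ => ?_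
  rw [hg.apply j l]
  ring

theorem sum_elasticity_mul_mul_eq (g t : Matrix n n ℝ) (hg : g.IsSymm) (ht : t.IsSymm)
    (lam mu : ℝ) :
    ∑ i, ∑ j, ∑ k, ∑ l,
        (lam * g i j * g k l + mu * (g i k * g j l + g i l * g j k)) * t k l * t i j
      = lam * (∑ i, ∑ j, g i j * t i j) ^ 2 + 2 * mu * ∑ i, ∑ j, (g * t * g) i j * t i j := by
  have hswap : ∑ i, ∑ j, ∑ k, ∑ l, g i l * g j k * t k l * t i j
      = ∑ i, ∑ j, ∑ k, ∑ l, g i k * g j l * t k l * t i j := by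
    refine Finset.sum_congr rfl fun i _ => Finset.sum_congr rfl fun j _ => ?_
    rw [Finset.sum_comm]
    refine Finset.sum_congr rfl fun k _ => Finset.sum_congr rfl fun l _ => ?_
    rw [ht.apply k l]
  have hsq : (∑ i, ∑ j, g i j * t i j) ^ 2
      = ∑ i, ∑ j, ∑ k, ∑ l, g i j * t i j * (g k l * t k l) := by
    rw [sq]
    simp only [Finset.sum_mul]
    simp only [Finset.mul_sum]
  have hsplit (i j k l : n) :
      (lam * g i j * g k l + mu * (g i k * g j l + g i l * g j k)) * t k l * t i j
        = lam * (g i j * t i j * (g k l * t k l)) + mu * (g i k * g j l * t k l * t i j)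
          + mu * (g i l * g j k * t k l * t i j) := by
    ring
  rw [hsq, ← sum_mul_mul_mul_mul_eq_sum_mul_mul g t hg]
  simp only [hsplit, Finset.sum_add_distrib, ← Finset.mul_sum]
  rw [hswap]
  ring

end QuadraticForm

theorem stmt1_general (a : Matrix (Fin 2) (Fin 2) ℝ) (hpos : a.PosDef)
    (lam mu : ℝ) (hlam : 0 ≤ lam) (hmu : 0 < mu)
    (g : Matrix (Fin 3) (Fin 3) ℝ)
    (hg : ∀ α β : Fin 2, g α.castSucc β.castSucc = a α β)
    (hg3 : ∀ α : Fin 2, g α.castSucc 2 = 0 ∧ g 2 α.castSucc = 0)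
    (hg33 : g 2 2 = 1)
    (A : Fin 3 → Fin 3 → Fin 3 → Fin 3 → ℝ)
    (hA : ∀ i j k l, A i j k l = lam * g i j * g k l + mu * (g i k * g j l + g i l * g j k)) :
    (∃ Ce > 0, ∀ t : Matrix (Fin 3) (Fin 3) ℝ, t.IsSymm →
      ∑ i, ∑ j, |t i j| ^ 2 ≤ Ce * ∑ i, ∑ j, ∑ k, ∑ l, A i j k l * t k l * t i j) ∧
    (∀ α β σ τ : Fin 2,
      A α.castSucc β.castSucc σ.castSucc τ.castSucc
        = lam * a α β * a σ τ + mu * (a α σ * a β τ + a α τ * a β σ) ∧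
      A α.castSucc β.castSucc 2 2 = lam * a α β ∧
      A α.castSucc 2 σ.castSucc 2 = mu * a α σ ∧
      A 2 2 2 2 = lam + 2 * mu ∧
      A α.castSucc β.castSucc σ.castSucc 2 = 0 ∧
      A α.castSucc 2 2 2 = 0) := by
  have hg_pos : g.PosDef := hpos.of_castSucc hg hg3 (hg33 ▸ one_pos)
  refine ⟨?_, fun α β σ τ => ?_⟩
  · obtain ⟨c, hc, hcoercive⟩ := hg_pos.exists_sum_sq_le
    refine ⟨c / (2 * mu), by positivity, fun t ht => ?_⟩
    simp only [hA, sq_abs,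
      sum_elasticity_mul_mul_eq g t (isHermitian_iff_isSymm.mp hg_pos.isHermitian) ht]
    calc ∑ i, ∑ j, t i j ^ 2 ≤ c * ∑ i, ∑ j, (g * t * g) i j * t i j := hcoercive t
      _ = c / (2 * mu) * (2 * mu * ∑ i, ∑ j, (g * t * g) i j * t i j) := by
        field_simp
      _ ≤ _ := by gcongr; exact le_add_of_nonneg_left (by positivity)
  · refine ⟨?_, ?_, ?_, ?_, ?_, ?_⟩ <;>
      simp only [hA, hg, hg33, (hg3 _).1, (hg3 _).2] <;> ring

/-- Uniform positive definiteness and component formulas for the limit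
three-dimensional elasticity tensor `A^{ijkl}(0)` of a linearly viscoelastic shell. -/
theorem stmt1 (a : Matrix (Fin 2) (Fin 2) ℝ) (hpos : a.PosDef) (hsym : a.IsSymm)
    (lam mu : ℝ) (hlam : 0 ≤ lam) (hmu : 0 < mu)
    (g : Matrix (Fin 3) (Fin 3) ℝ)
    (hg : ∀ α β : Fin 2, g α.castSucc β.castSucc = a α β)
    (hg3 : ∀ α : Fin 2, g α.castSucc 2 = 0 ∧ g 2 α.castSucc = 0)
    (hg33 : g 2 2 = 1)
    (A : Fin 3 → Fin 3 → Fin 3 → Fin 3 → ℝ)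
    (hA : ∀ i j k l, A i j k l = lam * g i j * g k l + mu * (g i k * g j l + g i l * g j k)) :
    (∃ Ce > 0, ∀ t : Matrix (Fin 3) (Fin 3) ℝ, t.IsSymm →
      ∑ i, ∑ j, |t i j| ^ 2 ≤ Ce * ∑ i, ∑ j, ∑ k, ∑ l, A i j k l * t k l * t i j) ∧
    (∀ α β σ τ : Fin 2,
      A α.castSucc β.castSucc σ.castSucc τ.castSucc
        = lam * a α β * a σ τ + mu * (a α σ * a β τ + a α τ * a β σ) ∧
      A α.castSucc β.castSucc 2 2 = lam * a α β ∧
      A α.castSucc 2 σ.castSucc 2 = mu * a α σ ∧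
      A 2 2 2 2 = lam + 2 * mu ∧
      A α.castSucc β.castSucc σ.castSucc 2 = 0 ∧
      A α.castSucc 2 2 2 = 0) :=
  stmt1_general a hpos lam mu hlam hmu g hg hg3 hg33 A hA
end

section
/- Let (a^{αβ}) be a symmetric positive definite 2×2 real matrix and let λ ≥ 0, μ > 0, θ ≥ 0, ρ ≥ 0 with θ + ρ > 0. Define a^{αβστ} := ((2λρ² + 4μθ²)/(θ + ρ)²) a^{αβ} a^{στ} + 2μ (a^{ασ} a^{βτ} + a^{ατ} a^{βσ}). Then there exists a constant c > 0 such that for every symmetric 2×2 real matrix t = (t_{αβ}): Σ_{α,β=1}^{2} a^{αβστ} t_{στ} t_{αβ} ≥ c · Σ_{α,β=1}^{2} |t_{αβ}|² (summation over σ, τ ∈ {1,2} understood). -/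
/-!
For symmetric `t` the two `μ`-terms of the tensor coincide, so the form equals
`K (a : t)² + 4μ ⟪(a ⊗ₖ a) t, t⟫` with `K ≥ 0`. The Kronecker square of a positive definite
matrix is positive definite, and a positive definite matrix dominates its least eigenvalue
times the identity.
-/

open Matrix

theorem Matrix.PosDef.exists_pos_mul_dotProduct_self_le {ι : Type*} [Fintype ι]
    {M : Matrix ι ι ℝ} (hM : M.PosDef) :
    ∃ c > 0, ∀ v : ι → ℝ, c * (v ⬝ᵥ v) ≤ v ⬝ᵥ M *ᵥ v := by
  classical
  set hH := hM.isHermitian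
  obtain ⟨c, hc, hcle⟩ : ∃ c > 0, ∀ i, c ≤ hH.eigenvalues i := by
    rcases isEmpty_or_nonempty ι with hι | hι
    · exact ⟨1, one_pos, isEmptyElim⟩
    · obtain ⟨i₀, hi₀⟩ := Finite.exists_min hH.eigenvalues
      exact ⟨_, hM.eigenvalues_pos i₀, hi₀⟩
  refine ⟨c, hc, fun v => ?_⟩
  set b := hH.eigenvectorBasis
  have hinner (u w : ι → ℝ) : u ⬝ᵥ w = inner ℝ (WithLp.toLp 2 u) (WithLp.toLp 2 w) := by
    simp [EuclideanSpace.inner_eq_star_dotProduct, dotProduct_comm]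
  have hcoord (i : ι) : (b i).ofLp ⬝ᵥ M *ᵥ v = hH.eigenvalues i * ((b i).ofLp ⬝ᵥ v) := by
    rw [dotProduct_mulVec, ← mulVec_transpose, ← conjTranspose_eq_transpose_of_trivial, hH.eq,
      hH.mulVec_eigenvectorBasis, smul_dotProduct, smul_eq_mul]
  have hnorm : v ⬝ᵥ v = ∑ i, ((b i).ofLp ⬝ᵥ v) ^ 2 := by
    rw [hinner, ← b.sum_inner_mul_inner]
    simp only [← hinner, dotProduct_comm v, sq]
  have hform : v ⬝ᵥ M *ᵥ v = ∑ i, hH.eigenvalues i * ((b i).ofLp ⬝ᵥ v) ^ 2 := by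
    rw [hinner, ← b.sum_inner_mul_inner]
    simp only [← hinner, hcoord, dotProduct_comm v]
    exact Finset.sum_congr rfl fun i _ => by ring
  rw [hnorm, hform, Finset.mul_sum]
  exact Finset.sum_le_sum fun i _ => mul_le_mul_of_nonneg_right (hcle i) (sq_nonneg _)

open scoped Kronecker in
theorem Matrix.PosDef.exists_pos_mul_sum_sq_le_sum_mul_mul {ι : Type*} [Fintype ι]
    {a : Matrix ι ι ℝ} (ha : a.PosDef) :
    ∃ c > 0, ∀ t : Matrix ι ι ℝ,
      c * ∑ α, ∑ β, t α β ^ 2 ≤ ∑ α, ∑ β, ∑ σ, ∑ τ, a α σ * a β τ * t σ τ * t α β := by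
  obtain ⟨c, hc, hle⟩ := (ha.kronecker ha).exists_pos_mul_dotProduct_self_le
  refine ⟨c, hc, fun t => ?_⟩
  convert hle (fun p => t p.1 p.2) using 1
  · simp [dotProduct, Fintype.sum_prod_type, sq]
  · simp only [dotProduct, mulVec, kronecker_apply, Fintype.sum_prod_type, Finset.mul_sum]
    exact Finset.sum_congr rfl fun _ _ => Finset.sum_congr rfl fun _ _ =>
      Finset.sum_congr rfl fun _ _ => Finset.sum_congr rfl fun _ _ => by ring

theorem Matrix.IsSymm.sum_elasticity_mul_mul_eq {ι : Type*} [Fintype ι] {t : Matrix ι ι ℝ}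
    (ht : t.IsSymm) (a : Matrix ι ι ℝ) (K m : ℝ) :
    ∑ α, ∑ β, ∑ σ, ∑ τ, (K * a α β * a σ τ + 2 * m * (a α σ * a β τ + a α τ * a β σ))
        * t σ τ * t α β =
      K * (∑ α, ∑ β, a α β * t α β) ^ 2
        + 4 * m * ∑ α, ∑ β, ∑ σ, ∑ τ, a α σ * a β τ * t σ τ * t α β := by
  have hswap : ∑ α, ∑ β, ∑ σ, ∑ τ, a α τ * a β σ * t σ τ * t α β =
      ∑ α, ∑ β, ∑ σ, ∑ τ, a α σ * a β τ * t σ τ * t α β := by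
    refine Finset.sum_congr rfl fun α _ => Finset.sum_congr rfl fun β _ => ?_
    rw [Finset.sum_comm]
    simp only [ht.apply]
  calc _ = ∑ α, ∑ β, ∑ σ, ∑ τ, (K * (a σ τ * t σ τ) * (a α β * t α β)
          + 2 * m * (a α σ * a β τ * t σ τ * t α β) + 2 * m * (a α τ * a β σ * t σ τ * t α β)) :=
        Finset.sum_congr rfl fun _ _ => Finset.sum_congr rfl fun _ _ =>
          Finset.sum_congr rfl fun _ _ => Finset.sum_congr rfl fun _ _ => by ring
    _ = K * (∑ α, ∑ β, a α β * t α β) * (∑ σ, ∑ τ, a σ τ * t σ τ)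
          + 2 * m * ∑ α, ∑ β, ∑ σ, ∑ τ, a α σ * a β τ * t σ τ * t α β
          + 2 * m * ∑ α, ∑ β, ∑ σ, ∑ τ, a α τ * a β σ * t σ τ * t α β := by
        simp only [Finset.sum_add_distrib, Finset.mul_sum, Finset.sum_mul]
    _ = _ := by rw [hswap]; ring

theorem stmt3_general (a : Matrix (Fin 2) (Fin 2) ℝ) (hpos : a.PosDef)
    (lam mu th rho : ℝ) (hlam : 0 ≤ lam) (hmu : 0 < mu)
    (A : Fin 2 → Fin 2 → Fin 2 → Fin 2 → ℝ)
    (hA : ∀ α β σ τ, A α β σ τ =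
      ((2 * lam * rho ^ 2 + 4 * mu * th ^ 2) / (th + rho) ^ 2) * a α β * a σ τ
        + 2 * mu * (a α σ * a β τ + a α τ * a β σ)) :
    ∃ c > 0, ∀ t : Matrix (Fin 2) (Fin 2) ℝ, t.IsSymm →
      c * ∑ α, ∑ β, |t α β| ^ 2 ≤ ∑ α, ∑ β, ∑ σ, ∑ τ, A α β σ τ * t σ τ * t α β := by
  obtain ⟨c, hc, hle⟩ := hpos.exists_pos_mul_sum_sq_le_sum_mul_mul
  refine ⟨4 * mu * c, by positivity, fun t ht => ?_⟩
  have hK : 0 ≤ (2 * lam * rho ^ 2 + 4 * mu * th ^ 2) / (th + rho) ^ 2 := by positivity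
  simp only [hA, sq_abs, ht.sum_elasticity_mul_mul_eq]
  linarith [mul_le_mul_of_nonneg_left (hle t) hmu.le,
    mul_nonneg hK (sq_nonneg (∑ α, ∑ β, a α β * t α β))]

/-- Uniform positive definiteness of the fourth-order two-dimensional elasticity tensor
`a^{αβστ}` of the limit viscoelastic flexural shell equations. -/
theorem stmt3 (a : Matrix (Fin 2) (Fin 2) ℝ) (hpos : a.PosDef) (hsym : a.IsSymm)
    (lam mu th rho : ℝ) (hlam : 0 ≤ lam) (hmu : 0 < mu) (hth : 0 ≤ th) (hrho : 0 ≤ rho)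
    (hsum : 0 < th + rho)
    (A : Fin 2 → Fin 2 → Fin 2 → Fin 2 → ℝ)
    (hA : ∀ α β σ τ, A α β σ τ =
      ((2 * lam * rho ^ 2 + 4 * mu * th ^ 2) / (th + rho) ^ 2) * a α β * a σ τ
        + 2 * mu * (a α σ * a β τ + a α τ * a β σ)) :
    ∃ c > 0, ∀ t : Matrix (Fin 2) (Fin 2) ℝ, t.IsSymm →
      c * ∑ α, ∑ β, |t α β| ^ 2 ≤ ∑ α, ∑ β, ∑ σ, ∑ τ, A α β σ τ * t σ τ * t α β :=
  stmt3_general a hpos lam mu th rho hlam hmu A hA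
end

section
/- Let λ ≥ 0, μ > 0, θ > 0, ρ ≥ 0, T > 0, and set k := (λ + 2μ)/(θ + ρ) and Λ := λ/θ − (λ + 2μ)/(θ + ρ). Let E, F : [0,T] → ℝ be differentiable with E(0) = 0 and F(0) = 0, and suppose that λ E(t) + (λ + 2μ) F(t) + θ E′(t) + (θ + ρ) F′(t) = 0 for all t ∈ [0,T]. Then F(t) = −(θ/(θ + ρ)) ( E(t) + Λ ∫₀ᵗ e^{−k(t−s)} E(s) ds ) for all t ∈ [0,T]. -/
/-! With `c = θ / (θ + ρ)`, the function `G = F + c E` solves `G' + k G = -c Λ E` with `G 0 = 0`,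
so variation of constants gives `G t = -c Λ ∫₀ᵗ e^{-k (t - s)} E s ds`. -/

open Set Real

theorem eq_exp_mul_add_integral_of_hasDerivWithinAt_add_mul_eq {a b k : ℝ} {G G' f : ℝ → ℝ}
    (hG : ∀ t ∈ Icc a b, HasDerivWithinAt G (G' t) (Icc a b) t) (hf : ContinuousOn f (Icc a b))
    (hode : ∀ t ∈ Icc a b, G' t + k * G t = f t) :
    ∀ t ∈ Icc a b, G t = exp (-k * (t - a)) * G a + ∫ s in a..t, exp (-k * (t - s)) * f s := by
  intro t ht
  have hsub : Icc a t ⊆ Icc a b := Icc_subset_Icc_right ht.2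
  have hexp : Continuous fun s => exp (k * s) := by fun_prop
  have hGcont : ContinuousOn G (Icc a t) := fun s hs => (hG s (hsub hs)).continuousWithinAt.mono hsub
  have hderiv : ∀ s ∈ Ioo a t,
      HasDerivAt (fun s => exp (k * s) * G s) (exp (k * s) * f s) s := by
    intro s hs
    have hGs : HasDerivAt G (G' s) s :=
      (hG s (hsub (Ioo_subset_Icc_self hs))).hasDerivAt
        (Icc_mem_nhds hs.1 (hs.2.trans_le ht.2))
    refine ((((hasDerivAt_id' s).const_mul k).exp).mul hGs).congr_deriv ?_
    rw [← hode s (hsub (Ioo_subset_Icc_self hs))]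
    ring
  have hint : IntervalIntegrable (fun s => exp (k * s) * f s) MeasureTheory.volume a t :=
    (hexp.continuousOn.mul (hf.mono hsub)).intervalIntegrable_of_Icc ht.1
  have hFTC : ∫ s in a..t, exp (k * s) * f s = exp (k * t) * G t - exp (k * a) * G a :=
    intervalIntegral.integral_eq_sub_of_hasDerivAt_of_le ht.1 (hexp.continuousOn.mul hGcont)
      hderiv hint
  have hkernel : (∫ s in a..t, exp (-k * (t - s)) * f s)
      = exp (-k * t) * ∫ s in a..t, exp (k * s) * f s := by
    rw [← intervalIntegral.integral_const_mul]
    refine intervalIntegral.integral_congr fun s _ => ?_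
    rw [← mul_assoc, ← exp_add]
    ring_nf
  have hcancel : exp (-k * t) * exp (k * t) = 1 := by rw [← exp_add]; simp
  rw [hkernel, hFTC, show -k * (t - a) = -k * t + k * a by ring, exp_add]
  linear_combination -G t * hcancel

theorem stmt6_general (lam mu th rho T : ℝ) (hth : 0 < th)
    (hrho : 0 ≤ rho)
    (k Λ : ℝ) (hk : k = (lam + 2 * mu) / (th + rho))
    (hΛ : Λ = lam / th - (lam + 2 * mu) / (th + rho))
    (E F E' F' : ℝ → ℝ) (hE0 : E 0 = 0) (hF0 : F 0 = 0)
    (hE : ∀ t ∈ Set.Icc (0 : ℝ) T, HasDerivWithinAt E (E' t) (Set.Icc 0 T) t)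
    (hF : ∀ t ∈ Set.Icc (0 : ℝ) T, HasDerivWithinAt F (F' t) (Set.Icc 0 T) t)
    (hode : ∀ t ∈ Set.Icc (0 : ℝ) T,
      lam * E t + (lam + 2 * mu) * F t + th * E' t + (th + rho) * F' t = 0) :
    ∀ t ∈ Set.Icc (0 : ℝ) T,
      F t = -(th / (th + rho)) *
        (E t + Λ * ∫ s in (0 : ℝ)..t, Real.exp (-k * (t - s)) * E s) := by
  set c := th / (th + rho)
  have hthr : th + rho ≠ 0 := by positivity
  have hG : ∀ t ∈ Icc (0 : ℝ) T,
      HasDerivWithinAt (fun t => F t + c * E t) (F' t + c * E' t) (Icc 0 T) t :=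
    fun t ht => (hF t ht).add ((hE t ht).const_mul c)
  have hGode : ∀ t ∈ Icc (0 : ℝ) T,
      (F' t + c * E' t) + k * (F t + c * E t) = -(c * Λ) * E t := by
    intro t ht
    have h := hode t ht
    rw [hk, hΛ]
    simp only [c]
    field_simp [hth.ne']
    linear_combination (th + rho) * h
  have hEcont : ContinuousOn (fun t => -(c * Λ) * E t) (Icc 0 T) :=
    continuousOn_const.mul fun t ht => (hE t ht).continuousWithinAt
  intro t ht
  have hsol := eq_exp_mul_add_integral_of_hasDerivWithinAt_add_mul_eq hG hEcont hGode t ht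
  simp only [hE0, hF0, mul_zero, add_zero, zero_add] at hsol
  simp_rw [mul_left_comm _ (-(c * Λ)), intervalIntegral.integral_const_mul] at hsol
  linear_combination hsol

/-- Solving the limit constitutive ODE linking the trace of the in-plane strain `E`
and the transverse strain `F` produces the exponential memory kernel. -/
theorem stmt6 (lam mu th rho T : ℝ) (hlam : 0 ≤ lam) (hmu : 0 < mu) (hth : 0 < th)
    (hrho : 0 ≤ rho) (hT : 0 < T)
    (k Λ : ℝ) (hk : k = (lam + 2 * mu) / (th + rho))
    (hΛ : Λ = lam / th - (lam + 2 * mu) / (th + rho))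
    (E F E' F' : ℝ → ℝ) (hE0 : E 0 = 0) (hF0 : F 0 = 0)
    (hE : ∀ t ∈ Set.Icc (0 : ℝ) T, HasDerivWithinAt E (E' t) (Set.Icc 0 T) t)
    (hF : ∀ t ∈ Set.Icc (0 : ℝ) T, HasDerivWithinAt F (F' t) (Set.Icc 0 T) t)
    (hode : ∀ t ∈ Set.Icc (0 : ℝ) T,
      lam * E t + (lam + 2 * mu) * F t + th * E' t + (th + rho) * F' t = 0) :
    ∀ t ∈ Set.Icc (0 : ℝ) T,
      F t = -(th / (th + rho)) *
        (E t + Λ * ∫ s in (0 : ℝ)..t, Real.exp (-k * (t - s)) * E s) :=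
  stmt6_general lam mu th rho T hth hrho k Λ hk hΛ E F E' F' hE0 hF0 hE hF hode
end

section
/- Let ω ⊂ ℝ² be a bounded domain with boundary γ, let Ω := ω × (−1, 1), let p > 1, and let g ∈ Lᵖ(Ω) be such that ∫_Ω g ∂₃v dx = 0 for every function v that is the restriction to Ω of a C^∞ function on ℝ³ and satisfies v = 0 on γ × [−1, 1]. Then g = 0 almost everywhere in Ω. -/
/-!
Testing with `v (x', t) = φ x' * t ^ (n + 1) / (n + 1)`, `φ` smooth with compact support in `ω`
(admissible because `v` need not vanish on the faces `ω × {±1}`), gives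
`∫_Ω g (x', t) φ x' tⁿ = 0`. By Fubini and the fundamental lemma of the calculus of variations
on `ω`, for a.e. `x'` every moment `∫ g (x', t) tⁿ dt` vanishes. By Weierstrass approximation the
slice `g (x', ·)` then annihilates every continuous function on `[-1, 1]`, so it vanishes a.e.,
and so does `g` on `Ω`.
-/

open MeasureTheory Set Filter

theorem IsOpen.ae_restrict_eq_zero_of_setIntegral_contDiff_smul_eq_zero {E F : Type*}
    [NormedAddCommGroup E] [NormedSpace ℝ E] [FiniteDimensional ℝ E] [MeasurableSpace E]
    [BorelSpace E] [NormedAddCommGroup F] [NormedSpace ℝ F] [CompleteSpace F]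
    {μ : Measure E} {U : Set E} (hU : IsOpen U) {f : E → F} (hf : LocallyIntegrableOn f U μ)
    (h : ∀ g : E → ℝ, ContDiff ℝ (⊤ : ℕ∞) g → HasCompactSupport g → tsupport g ⊆ U →
      ∫ x in U, g x • f x ∂μ = 0) :
    ∀ᵐ x ∂μ.restrict U, f x = 0 := by
  refine (ae_restrict_iff' hU.measurableSet).2
    (hU.ae_eq_zero_of_integral_contDiff_smul_eq_zero hf fun g hg hgc hgU => ?_)
  rw [← h g hg hgc hgU, setIntegral_eq_integral_of_forall_compl_eq_zero]
  intro x hx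
  rw [image_eq_zero_of_notMem_tsupport fun hxg => hx (hgU hxg), zero_smul]

section Moments

variable {a b : ℝ} {h : ℝ → ℝ}

theorem MeasureTheory.IntegrableOn.mul_continuousOn_Icc (hh : IntegrableOn h (Ioo a b)) {f : ℝ → ℝ}
    (hf : ContinuousOn f (Icc a b)) : IntegrableOn (fun t => h t * f t) (Ioo a b) :=
  hh.mul_continuousOn_of_subset hf measurableSet_Ioo isCompact_Icc Ioo_subset_Icc_self

theorem setIntegral_mul_polynomial_eq_zero (hh : IntegrableOn h (Ioo a b))
    (hmom : ∀ n : ℕ, ∫ t in Ioo a b, h t * t ^ n = 0) (q : Polynomial ℝ) :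
    ∫ t in Ioo a b, h t * q.eval t = 0 := by
  induction q using Polynomial.induction_on' with
  | add q r hq hr =>
    simp only [Polynomial.eval_add, mul_add]
    rw [integral_add (hh.mul_continuousOn_Icc q.continuous.continuousOn)
      (hh.mul_continuousOn_Icc r.continuous.continuousOn), hq, hr, add_zero]
  | monomial n c =>
    simp only [Polynomial.eval_monomial, mul_left_comm (h _), integral_const_mul, hmom n, mul_zero]

theorem setIntegral_mul_eq_zero_of_moments_eq_zero (hh : IntegrableOn h (Ioo a b))
    (hmom : ∀ n : ℕ, ∫ t in Ioo a b, h t * t ^ n = 0) {f : ℝ → ℝ}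
    (hf : ContinuousOn f (Icc a b)) :
    ∫ t in Ioo a b, h t * f t = 0 := by
  set M := ∫ t in Ioo a b, |h t|
  have hM : 0 ≤ M := integral_nonneg fun t => abs_nonneg _
  refine abs_nonpos_iff.1 (le_of_forall_pos_le_add fun ε hε => ?_)
  set δ := ε / (M + 1)
  obtain ⟨q, hq⟩ := exists_polynomial_near_of_continuousOn a b f hf δ (by positivity)
  have hbound : ∀ᵐ t ∂volume.restrict (Ioo a b), ‖h t * f t - h t * q.eval t‖ ≤ δ * |h t| := by
    filter_upwards [ae_restrict_mem measurableSet_Ioo] with t ht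
    rw [← mul_sub, Real.norm_eq_abs, abs_mul, mul_comm, abs_sub_comm]
    exact mul_le_mul_of_nonneg_right (hq t (Ioo_subset_Icc_self ht)).le (abs_nonneg _)
  calc |∫ t in Ioo a b, h t * f t|
      = |∫ t in Ioo a b, (h t * f t - h t * q.eval t)| := by
        rw [integral_sub (hh.mul_continuousOn_Icc hf)
            (hh.mul_continuousOn_Icc q.continuous.continuousOn),
          setIntegral_mul_polynomial_eq_zero hh hmom q, sub_zero]
    _ ≤ ∫ t in Ioo a b, δ * |h t| := norm_integral_le_of_norm_le (hh.abs.const_mul δ) hbound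
    _ = δ * M := integral_const_mul δ _
    _ ≤ 0 + ε := by
        rw [zero_add, div_mul_eq_mul_div, div_le_iff₀ (by positivity)]
        nlinarith

theorem ae_eq_zero_of_moments_eq_zero (hh : IntegrableOn h (Ioo a b))
    (hmom : ∀ n : ℕ, ∫ t in Ioo a b, h t * t ^ n = 0) :
    ∀ᵐ t ∂volume.restrict (Ioo a b), h t = 0 :=
  isOpen_Ioo.ae_restrict_eq_zero_of_setIntegral_contDiff_smul_eq_zero hh.locallyIntegrableOn
    fun ψ hψ _ _ => by
      simpa only [smul_eq_mul, mul_comm] using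
        setIntegral_mul_eq_zero_of_moments_eq_zero hh hmom hψ.continuous.continuousOn

end Moments

section Fubini

variable {α β : Type*} [MeasurableSpace α] [MeasurableSpace β] {μ : Measure α} {ν : Measure β}
  [SFinite ν]

theorem ae_prod_eq_zero_of_ae_ae {G : α × β → ℝ} (hG : AEMeasurable G (μ.prod ν))
    (h : ∀ᵐ x ∂μ, ∀ᵐ y ∂ν, G (x, y) = 0) :
    ∀ᵐ z ∂μ.prod ν, G z = 0 := by
  have hzero : ∫⁻ z, ‖G z‖ₑ ∂μ.prod ν = 0 := by
    rw [lintegral_prod _ hG.enorm]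
    refine lintegral_eq_zero_of_ae_eq_zero ?_
    filter_upwards [h] with x hx
    simp only [Pi.zero_apply]
    rw [lintegral_congr_ae (hx.mono fun y hy => by rw [hy, enorm_zero]), lintegral_zero]
  filter_upwards [(lintegral_eq_zero_iff' hG.enorm).1 hzero] with z hz
  simpa using hz

theorem IsOpen.ae_restrict_integral_prod_mk_eq_zero {E : Type*} [NormedAddCommGroup E]
    [NormedSpace ℝ E] [FiniteDimensional ℝ E] [MeasurableSpace E] [BorelSpace E]
    {μ : Measure E} [SFinite μ] {U : Set E} (hU : IsOpen U) {G : E × β → ℝ}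
    (hG : Integrable G ((μ.restrict U).prod ν))
    (h : ∀ φ : E → ℝ, ContDiff ℝ (⊤ : ℕ∞) φ → HasCompactSupport φ → tsupport φ ⊆ U →
      ∫ z, φ z.1 * G z ∂(μ.restrict U).prod ν = 0) :
    ∀ᵐ x ∂μ.restrict U, ∫ y, G (x, y) ∂ν = 0 := by
  refine hU.ae_restrict_eq_zero_of_setIntegral_contDiff_smul_eq_zero
    (IntegrableOn.locallyIntegrableOn hG.integral_prod_left) fun φ hφ hφc hφU => ?_
  obtain ⟨C, hC⟩ := hφc.exists_bound_of_continuous hφ.continuous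
  have hφG : Integrable (fun z => φ z.1 * G z) ((μ.restrict U).prod ν) :=
    hG.bdd_mul (hφ.continuous.measurable.comp measurable_fst).aestronglyMeasurable
      (Eventually.of_forall fun z => hC z.1)
  simp_rw [smul_eq_mul, ← integral_const_mul]
  rw [← integral_prod (fun z => φ z.1 * G z) hφG]
  exact h φ hφ hφc hφU

end Fubini

section Tensor

variable {E : Type*} [NormedAddCommGroup E] [NormedSpace ℝ E]

theorem fderiv_mul_fst_snd_apply_zero_one {φ : E → ℝ} {Ψ : ℝ → ℝ} {x : E × ℝ}
    (hφ : DifferentiableAt ℝ φ x.1) (hΨ : DifferentiableAt ℝ Ψ x.2) :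
    fderiv ℝ (fun y : E × ℝ => φ y.1 * Ψ y.2) x (0, 1) = φ x.1 * deriv Ψ x.2 := by
  have hφ' := hφ.hasFDerivAt.comp x hasFDerivAt_fst
  have hΨ' := hΨ.hasDerivAt.hasFDerivAt.comp x hasFDerivAt_snd
  rw [HasFDerivAt.fderiv (f := fun y : E × ℝ => φ y.1 * Ψ y.2) (hφ'.mul hΨ')]
  simp

theorem integral_mul_tensor_deriv_eq_zero [MeasurableSpace E] {ω : Set E} (hω : IsOpen ω)
    {I : Set ℝ} {μ : Measure (E × ℝ)} {g : E × ℝ → ℝ}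
    (hg : ∀ v : E × ℝ → ℝ, ContDiff ℝ (⊤ : ℕ∞) v → (∀ x ∈ frontier ω ×ˢ I, v x = 0) →
      ∫ x, g x * fderiv ℝ v x (0, 1) ∂μ = 0)
    {φ : E → ℝ} (hφ : ContDiff ℝ (⊤ : ℕ∞) φ) (hφω : tsupport φ ⊆ ω)
    {Ψ : ℝ → ℝ} (hΨ : ContDiff ℝ (⊤ : ℕ∞) Ψ) :
    ∫ x, g x * (φ x.1 * deriv Ψ x.2) ∂μ = 0 := by
  have hvanish : ∀ x ∈ frontier ω ×ˢ I, φ x.1 * Ψ x.2 = 0 := fun x hx => by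
    have hxω : x.1 ∉ ω := fun h => (hω.frontier_eq ▸ hx.1).2 h
    rw [image_eq_zero_of_notMem_tsupport fun h => hxω (hφω h), zero_mul]
  have := hg (fun y => φ y.1 * Ψ y.2) ((hφ.comp contDiff_fst).mul (hΨ.comp contDiff_snd)) hvanish
  simpa only [fderiv_mul_fst_snd_apply_zero_one (hφ.differentiable (by simp) _)
    (hΨ.differentiable (by simp) _)] using this

theorem integral_mul_tensor_pow_eq_zero [MeasurableSpace E] {ω : Set E} (hω : IsOpen ω)
    {I : Set ℝ} {μ : Measure (E × ℝ)} {g : E × ℝ → ℝ}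
    (hg : ∀ v : E × ℝ → ℝ, ContDiff ℝ (⊤ : ℕ∞) v → (∀ x ∈ frontier ω ×ˢ I, v x = 0) →
      ∫ x, g x * fderiv ℝ v x (0, 1) ∂μ = 0)
    {φ : E → ℝ} (hφ : ContDiff ℝ (⊤ : ℕ∞) φ) (hφω : tsupport φ ⊆ ω) (n : ℕ) :
    ∫ x, φ x.1 * (g x * x.2 ^ n) ∂μ = 0 := by
  have hderiv : ∀ t : ℝ, deriv (fun t : ℝ => t ^ (n + 1) / (n + 1)) t = t ^ n := fun t => by
    simp only [deriv_div_const, differentiableAt_fun_id, deriv_fun_pow, Nat.cast_add,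
      Nat.cast_one, add_tsub_cancel_right, deriv_id'', mul_one]
    field_simp
  have := integral_mul_tensor_deriv_eq_zero hω hg hφ hφω
    (Ψ := fun t => t ^ (n + 1) / (n + 1)) (by fun_prop)
  simp only [hderiv] at this
  rw [← this]
  congr 1 with x
  ring

end Tensor

theorem stmt11_general (ω : Set (Fin 2 → ℝ)) (hωo : IsOpen ω) (hωb : Bornology.IsBounded ω)
    (p : ENNReal) (hp : 1 < p)
    (g : (Fin 2 → ℝ) × ℝ → ℝ)
    (hg : MemLp g p (volume.restrict (ω ×ˢ Set.Ioo (-1 : ℝ) 1)))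
    (hdist : ∀ v : (Fin 2 → ℝ) × ℝ → ℝ, ContDiff ℝ (⊤ : ℕ∞) v →
      (∀ x ∈ (frontier ω) ×ˢ Set.Icc (-1 : ℝ) 1, v x = 0) →
      ∫ x in ω ×ˢ Set.Ioo (-1 : ℝ) 1, g x * fderiv ℝ v x (0, 1) = 0) :
    ∀ᵐ x ∂(volume.restrict (ω ×ˢ Set.Ioo (-1 : ℝ) 1)), g x = 0 := by
  set μ := volume.restrict ω
  set ν := volume.restrict (Ioo (-1 : ℝ) 1)
  have hprod : volume.restrict (ω ×ˢ Ioo (-1 : ℝ) 1) = μ.prod ν := by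
    rw [Measure.volume_eq_prod, ← Measure.prod_restrict]
  have : IsFiniteMeasure μ := isFiniteMeasure_restrict.2 hωb.measure_lt_top.ne
  rw [hprod] at hg hdist ⊢
  have hgi : Integrable g (μ.prod ν) := hg.integrable hp.le
  have hpow_le : ∀ᵐ t ∂ν, ∀ n : ℕ, ‖t ^ n‖ ≤ 1 :=
    (ae_restrict_mem measurableSet_Ioo).mono fun t ht n => by
      rw [norm_pow, Real.norm_eq_abs]
      exact pow_le_one₀ (abs_nonneg t) (abs_lt.2 ht).le
  have hmom : ∀ n : ℕ, Integrable (fun z => g z * z.2 ^ n) (μ.prod ν) := fun n =>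
    hgi.mul_bdd (by fun_prop)
      ((Measure.quasiMeasurePreserving_snd.ae hpow_le).mono fun z hz => hz n)
  have hslice : ∀ n : ℕ, ∀ᵐ x ∂μ, ∫ t, g (x, t) * t ^ n ∂ν = 0 := fun n =>
    hωo.ae_restrict_integral_prod_mk_eq_zero (hmom n) fun _ hφ _ hφω =>
      integral_mul_tensor_pow_eq_zero hωo hdist hφ hφω n
  refine ae_prod_eq_zero_of_ae_ae hg.aestronglyMeasurable.aemeasurable ?_
  filter_upwards [hgi.prod_right_ae, ae_all_iff.2 hslice] with x hx hxm
  exact ae_eq_zero_of_moments_eq_zero hx hxm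

/-- If `g ∈ Lᵖ(Ω)`, `p > 1`, `Ω = ω × (−1,1)`, satisfies `∫_Ω g ∂₃v = 0` for every
smooth `v` vanishing on the lateral face `γ × [−1,1]`, then `g = 0` a.e. in `Ω`. -/
theorem stmt11 (ω : Set (Fin 2 → ℝ)) (hωo : IsOpen ω) (hωb : Bornology.IsBounded ω)
    (hωc : IsConnected ω)
    (p : ENNReal) (hp : 1 < p)
    (g : (Fin 2 → ℝ) × ℝ → ℝ)
    (hg : MemLp g p (volume.restrict (ω ×ˢ Set.Ioo (-1 : ℝ) 1)))
    (hdist : ∀ v : (Fin 2 → ℝ) × ℝ → ℝ, ContDiff ℝ (⊤ : ℕ∞) v →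
      (∀ x ∈ (frontier ω) ×ˢ Set.Icc (-1 : ℝ) 1, v x = 0) →
      ∫ x in ω ×ˢ Set.Ioo (-1 : ℝ) 1, g x * fderiv ℝ v x (0, 1) = 0) :
    ∀ᵐ x ∂(volume.restrict (ω ×ˢ Set.Ioo (-1 : ℝ) 1)), g x = 0 :=
  stmt11_general ω hωo hωb p hp g hg hdist
end
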